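/- Let 0 → (M, α_M) →(i) (K, α_K) →(π) (L, α_L) → 0 be a central extension of Hom-preLie algebras with (K, α_K) an α-perfect Hom-preLie algebra, and let 0 → (N, α_N) →(j) (A, α_A) →(τ) (L, α_L) → 0 be an α-central extension. If f_1, f_2 : (K, α_K) → (A, α_A) are Hom-preLie homomorphisms with τ ∘ f_1 = π = τ ∘ f_2, then f_1 = f_2. -/

import Mathlib

/-! Since `τ ∘ f₁ = τ ∘ f₂`, the maps `f₁` and `f₂` differ by elements of `ker τ = j(N)`, and `α_A`
sends `j(N)` into the annihilator of `A` because the extension is α-central. Hence `f₁` and `f₂`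
agree on every product `α_K(x) α_K(y)`, and these span `K`. -/

universe u v v₁ v₂ v₃ v₄ w₁ w₂ w₃ w₄

/-- A Hom-preLie algebra over a field `𝕂`: a vector space with a bilinear
multiplication `mul` and a linear map `a` satisfying
`(α x)(y z) - (x y)(α z) = (α y)(x z) - (y x)(α z)`. -/
structure HomPreLie (𝕂 : Type u) [Field 𝕂] (L : Type v) [AddCommGroup L] [Module 𝕂 L] where
  mul : L →ₗ[𝕂] L →ₗ[𝕂] L
  a : L →ₗ[𝕂] L
  identity : ∀ x y z : L,
    mul (a x) (mul y z) - mul (mul x y) (a z) = mul (a y) (mul x z) - mul (mul y x) (a z)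

namespace HomPreLie

variable {𝕂 : Type u} [Field 𝕂]

/-- A homomorphism of Hom-preLie algebras. -/
def IsHom {L : Type v₁} [AddCommGroup L] [Module 𝕂 L]
    {L' : Type v₂} [AddCommGroup L'] [Module 𝕂 L']
    (A : HomPreLie 𝕂 L) (B : HomPreLie 𝕂 L') (f : L →ₗ[𝕂] L') : Prop :=
  (∀ x y : L, f (A.mul x y) = B.mul (f x) (f y)) ∧ ∀ x : L, f (A.a x) = B.a (f x)

/-- Perfect: `L = LL`. -/
def Perfect {L : Type v₁} [AddCommGroup L] [Module 𝕂 L] (A : HomPreLie 𝕂 L) : Prop :=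
  Submodule.span 𝕂 {z : L | ∃ x y : L, z = A.mul x y} = ⊤

/-- α-perfect: `L = α(L)α(L)`. -/
def AlphaPerfect {L : Type v₁} [AddCommGroup L] [Module 𝕂 L] (A : HomPreLie 𝕂 L) : Prop :=
  Submodule.span 𝕂 {z : L | ∃ x y : L, z = A.mul (A.a x) (A.a y)} = ⊤

/-- The annihilator `Z(L)`. -/
def ann {L : Type v₁} [AddCommGroup L] [Module 𝕂 L] (A : HomPreLie 𝕂 L) : Set L :=
  {x : L | ∀ y : L, A.mul x y = 0 ∧ A.mul y x = 0}

/-- A short exact sequence of Hom-preLie algebras `0 → M → K → L → 0`. -/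
structure IsSES {M : Type v₁} [AddCommGroup M] [Module 𝕂 M]
    {K : Type v₂} [AddCommGroup K] [Module 𝕂 K]
    {L : Type v₃} [AddCommGroup L] [Module 𝕂 L]
    (AM : HomPreLie 𝕂 M) (AK : HomPreLie 𝕂 K) (AL : HomPreLie 𝕂 L)
    (i : M →ₗ[𝕂] K) (π : K →ₗ[𝕂] L) : Prop where
  hom_i : AM.IsHom AK i
  hom_proj : AK.IsHom AL π
  inj : Function.Injective i
  surj : Function.Surjective π
  ran_eq_ker : LinearMap.range i = LinearMap.ker π

/-- A central extension: a short exact sequence with `MK = 0 = KM`. -/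
def IsCentralExt {M : Type v₁} [AddCommGroup M] [Module 𝕂 M]
    {K : Type v₂} [AddCommGroup K] [Module 𝕂 K]
    {L : Type v₃} [AddCommGroup L] [Module 𝕂 L]
    (AM : HomPreLie 𝕂 M) (AK : HomPreLie 𝕂 K) (AL : HomPreLie 𝕂 L)
    (i : M →ₗ[𝕂] K) (π : K →ₗ[𝕂] L) : Prop :=
  IsSES AM AK AL i π ∧ ∀ (m : M) (k : K), AK.mul (i m) k = 0 ∧ AK.mul k (i m) = 0

/-- An α-central extension: a short exact sequence with `α_M(M)K = 0 = Kα_M(M)`. -/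
def IsAlphaCentralExt {M : Type v₁} [AddCommGroup M] [Module 𝕂 M]
    {K : Type v₂} [AddCommGroup K] [Module 𝕂 K]
    {L : Type v₃} [AddCommGroup L] [Module 𝕂 L]
    (AM : HomPreLie 𝕂 M) (AK : HomPreLie 𝕂 K) (AL : HomPreLie 𝕂 L)
    (i : M →ₗ[𝕂] K) (π : K →ₗ[𝕂] L) : Prop :=
  IsSES AM AK AL i π ∧
    ∀ (m : M) (k : K), AK.mul (i (AM.a m)) k = 0 ∧ AK.mul k (i (AM.a m)) = 0

/-- A universal central extension. -/
def IsUniversalCentralExt {M : Type v₁} [AddCommGroup M] [Module 𝕂 M]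
    {K : Type v₂} [AddCommGroup K] [Module 𝕂 K]
    {L : Type v₃} [AddCommGroup L] [Module 𝕂 L]
    (AM : HomPreLie 𝕂 M) (AK : HomPreLie 𝕂 K) (AL : HomPreLie 𝕂 L)
    (i : M →ₗ[𝕂] K) (π : K →ₗ[𝕂] L) : Prop :=
  IsCentralExt AM AK AL i π ∧
    ∀ (M' : Type w₁) (K' : Type w₂) [AddCommGroup M'] [Module 𝕂 M']
      [AddCommGroup K'] [Module 𝕂 K']
      (AM' : HomPreLie 𝕂 M') (AK' : HomPreLie 𝕂 K')
      (i' : M' →ₗ[𝕂] K') (π' : K' →ₗ[𝕂] L),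
      IsCentralExt AM' AK' AL i' π' →
        ∃! h : K →ₗ[𝕂] K', AK.IsHom AK' h ∧ π' ∘ₗ h = π

/-- A universal α-central extension: a central extension through which every
α-central extension factors uniquely. -/
def IsUniversalAlphaCentralExt {M : Type v₁} [AddCommGroup M] [Module 𝕂 M]
    {K : Type v₂} [AddCommGroup K] [Module 𝕂 K]
    {L : Type v₃} [AddCommGroup L] [Module 𝕂 L]
    (AM : HomPreLie 𝕂 M) (AK : HomPreLie 𝕂 K) (AL : HomPreLie 𝕂 L)
    (i : M →ₗ[𝕂] K) (π : K →ₗ[𝕂] L) : Prop :=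
  IsCentralExt AM AK AL i π ∧
    ∀ (M' : Type w₁) (K' : Type w₂) [AddCommGroup M'] [Module 𝕂 M']
      [AddCommGroup K'] [Module 𝕂 K']
      (AM' : HomPreLie 𝕂 M') (AK' : HomPreLie 𝕂 K')
      (i' : M' →ₗ[𝕂] K') (π' : K' →ₗ[𝕂] L),
      IsAlphaCentralExt AM' AK' AL i' π' →
        ∃! h : K →ₗ[𝕂] K', AK.IsHom AK' h ∧ π' ∘ₗ h = π

theorem mul_eq_mul_of_sub_mem_ann {A : Type v₁} [AddCommGroup A] [Module 𝕂 A]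
    (AA : HomPreLie 𝕂 A) {x₁ x₂ y₁ y₂ : A}
    (hx : x₁ - x₂ ∈ AA.ann) (hy : y₁ - y₂ ∈ AA.ann) :
    AA.mul x₁ y₁ = AA.mul x₂ y₂ := by
  obtain ⟨dx, rfl⟩ : ∃ dx, x₁ = x₂ + dx := ⟨x₁ - x₂, by abel⟩
  obtain ⟨dy, rfl⟩ : ∃ dy, y₁ = y₂ + dy := ⟨y₁ - y₂, by abel⟩
  simp only [add_sub_cancel_left] at hx hy
  simp only [map_add, LinearMap.add_apply, (hx _).1, (hy _).2, add_zero]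

section AlphaCentral

variable {N : Type v₁} [AddCommGroup N] [Module 𝕂 N]
    {A : Type v₂} [AddCommGroup A] [Module 𝕂 A]
    {L : Type v₃} [AddCommGroup L] [Module 𝕂 L]
    {AN : HomPreLie 𝕂 N} {AA : HomPreLie 𝕂 A} {AL : HomPreLie 𝕂 L}
    {j : N →ₗ[𝕂] A} {τ : A →ₗ[𝕂] L}

theorem IsAlphaCentralExt.a_mem_ann_of_mem_ker (h : IsAlphaCentralExt AN AA AL j τ)
    {x : A} (hx : x ∈ LinearMap.ker τ) : AA.a x ∈ AA.ann := by
  rw [← h.1.ran_eq_ker] at hx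
  obtain ⟨n, rfl⟩ := hx
  rw [← h.1.hom_i.2 n]
  exact h.2 n

theorem IsAlphaCentralExt.mul_a_a_eq_of_map_eq (h : IsAlphaCentralExt AN AA AL j τ)
    {x₁ x₂ y₁ y₂ : A} (hx : τ x₁ = τ x₂) (hy : τ y₁ = τ y₂) :
    AA.mul (AA.a x₁) (AA.a y₁) = AA.mul (AA.a x₂) (AA.a y₂) := by
  have hker : ∀ {z w : A}, τ z = τ w → AA.a z - AA.a w ∈ AA.ann := fun hzw => by
    rw [← map_sub]
    exact h.a_mem_ann_of_mem_ker (by simp [hzw])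
  exact AA.mul_eq_mul_of_sub_mem_ann (hker hx) (hker hy)

end AlphaCentral

end HomPreLie

theorem stmt18_general {𝕂 : Type u} [Field 𝕂]
    {K : Type v₂} [AddCommGroup K] [Module 𝕂 K]
    {L : Type v₃} [AddCommGroup L] [Module 𝕂 L]
    {N : Type w₁} [AddCommGroup N] [Module 𝕂 N]
    {A : Type w₂} [AddCommGroup A] [Module 𝕂 A]
    (AK : HomPreLie 𝕂 K) (AL : HomPreLie 𝕂 L)
    (AN : HomPreLie 𝕂 N) (AA : HomPreLie 𝕂 A)
    (π : K →ₗ[𝕂] L) (j : N →ₗ[𝕂] A) (τ : A →ₗ[𝕂] L)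
    (hαperf : AK.AlphaPerfect)
    (hαcentral : HomPreLie.IsAlphaCentralExt AN AA AL j τ)
    (f₁ f₂ : K →ₗ[𝕂] A)
    (hf₁ : AK.IsHom AA f₁) (hf₂ : AK.IsHom AA f₂)
    (hcomm₁ : τ ∘ₗ f₁ = π) (hcomm₂ : τ ∘ₗ f₂ = π) :
    f₁ = f₂ := by
  have hτ : ∀ k, τ (f₁ k) = τ (f₂ k) := fun k => by
    rw [← LinearMap.comp_apply, hcomm₁, ← hcomm₂, LinearMap.comp_apply]
  refine LinearMap.ext_on hαperf ?_
  rintro _ ⟨x, y, rfl⟩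
  rw [hf₁.1, hf₂.1, hf₁.2, hf₁.2, hf₂.2, hf₂.2]
  exact hαcentral.mul_a_a_eq_of_map_eq (hτ x) (hτ y)

/-- Given a central extension `0 → (M,α_M) → (K,α_K) →π (L,α_L) → 0` with `(K,α_K)`
α-perfect and an α-central extension `0 → (N,α_N) → (A,α_A) →τ (L,α_L) → 0`, any two
Hom-preLie homomorphisms `f₁ f₂ : K → A` with `τ ∘ f₁ = π = τ ∘ f₂` coincide. -/
theorem stmt18 {𝕂 : Type u} [Field 𝕂]
    {M : Type v₁} [AddCommGroup M] [Module 𝕂 M]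
    {K : Type v₂} [AddCommGroup K] [Module 𝕂 K]
    {L : Type v₃} [AddCommGroup L] [Module 𝕂 L]
    {N : Type w₁} [AddCommGroup N] [Module 𝕂 N]
    {A : Type w₂} [AddCommGroup A] [Module 𝕂 A]
    (AM : HomPreLie 𝕂 M) (AK : HomPreLie 𝕂 K) (AL : HomPreLie 𝕂 L)
    (AN : HomPreLie 𝕂 N) (AA : HomPreLie 𝕂 A)
    (i : M →ₗ[𝕂] K) (π : K →ₗ[𝕂] L) (j : N →ₗ[𝕂] A) (τ : A →ₗ[𝕂] L)
    (hcentral : HomPreLie.IsCentralExt AM AK AL i π)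
    (hαperf : AK.AlphaPerfect)
    (hαcentral : HomPreLie.IsAlphaCentralExt AN AA AL j τ)
    (f₁ f₂ : K →ₗ[𝕂] A)
    (hf₁ : AK.IsHom AA f₁) (hf₂ : AK.IsHom AA f₂)
    (hcomm₁ : τ ∘ₗ f₁ = π) (hcomm₂ : τ ∘ₗ f₂ = π) :
    f₁ = f₂ :=
  stmt18_general AK AL AN AA π j τ hαperf hαcentral f₁ f₂ hf₁ hf₂ hcomm₁ hcomm₂
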